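/- Selector-variable soundness: let ψ = ∃s Q̂.(φ ∧ ⋀_{C∈F}(C ∪ {s})) be a closed prenex formula where the fresh existential variable s occurs only positively (in the clauses of frame F) and is in the leftmost block. Then ψ[s↦false] is satisfiability-equivalent to Q̂.(φ ∧ ⋀_{C∈F} C), and ψ[s↦true] is satisfiability-equivalent to Q̂.φ. -/

import Mathlib

/-- Variables are natural numbers. -/
abbrev Var := Nat

/-- A literal: a variable with a polarity (`pos = true` means positive). -/
structure Lit where
  var : Var
  pos : Bool
deriving DecidableEq, Repr

abbrev Clause := List Lit
abbrev Cube := List Lit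
abbrev CNF := List Clause

abbrev Assignment := Var → Bool

def Lit.eval (α : Assignment) (l : Lit) : Bool :=
  if l.pos then α l.var else !(α l.var)

def Clause.eval (α : Assignment) (C : Clause) : Bool := C.any (Lit.eval α)

def Cube.evalCube (α : Assignment) (C : Cube) : Bool := C.all (Lit.eval α)

def CNF.eval (α : Assignment) (φ : CNF) : Bool := φ.all (Clause.eval α)

/-- A flat quantifier prefix: list of (quantifier, variable); `true` = ∃, `false` = ∀. -/
abbrev QPrefix := List (Bool × Var)

/-- Recursive semantics of closed prenex QBFs, relative to an ambient assignment `α`. -/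
def QSat (α : Assignment) : QPrefix → (Assignment → Bool) → Prop
  | [], m => m α = true
  | (true, x) :: p, m => ∃ b, QSat (Function.update α x b) p m
  | (false, x) :: p, m => ∀ b, QSat (Function.update α x b) p m

/-- Satisfiability of a closed prenex formula. -/
def Sat (L : QPrefix) (m : Assignment → Bool) : Prop :=
  QSat (fun _ => false) L m

def pvars (L : QPrefix) : List Var := L.map Prod.snd

/-- The quantifier of a variable in the prefix (`true` = ∃). -/
def quantOf (L : QPrefix) (x : Var) : Bool :=
  ((L.find? (fun p => p.2 == x)).map Prod.fst).getD true

/-- Position of a variable in the linear prefix ordering. -/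
def varIdx (L : QPrefix) (x : Var) : Nat := (pvars L).idxOf x

def Clause.vars (C : Clause) : List Var := C.map Lit.var
def CNF.vars (φ : CNF) : List Var := φ.flatMap Clause.vars

/-- A closed PCNF: all matrix variables are quantified, and no variable twice. -/
def Closed (L : QPrefix) (φ : CNF) : Prop :=
  (∀ v ∈ CNF.vars φ, v ∈ pvars L) ∧ (pvars L).Nodup

def existLits (L : QPrefix) (C : List Lit) : List Lit :=
  C.filter (fun l => quantOf L l.var)

def univLits (L : QPrefix) (C : List Lit) : List Lit :=
  C.filter (fun l => !(quantOf L l.var))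

/-- Universal reduction of a clause: remove universal literals larger than all
existential literals of the clause. -/
def univRed (L : QPrefix) (C : Clause) : Clause :=
  C.filter (fun l =>
    !((!(quantOf L l.var)) &&
      (existLits L C).all (fun l' => decide (varIdx L l'.var < varIdx L l.var))))

/-- Existential reduction of a cube: remove existential literals larger than all
universal literals of the cube. -/
def exRed (L : QPrefix) (C : Cube) : Cube :=
  C.filter (fun l =>
    !((quantOf L l.var) &&
      (univLits L C).all (fun l' => decide (varIdx L l'.var < varIdx L l.var))))

def Lit.neg (l : Lit) : Lit := ⟨l.var, !l.pos⟩

/-- Tautological clause / contradictory cube: contains complementary literals. -/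
def Tauto (C : List Lit) : Prop := ∃ l ∈ C, Lit.neg l ∈ C

/-- Tentative Q-qResolvent of two clauses on existential pivot `p`. -/
def qResolvent (L : QPrefix) (C₁ C₂ : Clause) (p : Var) : Clause :=
  (univRed L C₁).filter (fun l => l ≠ ⟨p, true⟩) ++
  (univRed L C₂).filter (fun l => l ≠ ⟨p, false⟩)

/-- Q-resolution derivations from the clauses of `φ`. -/
inductive QDer (L : QPrefix) (φ : CNF) : Clause → Prop
  | ax {C} : C ∈ φ → QDer L φ C
  | ur {C} : QDer L φ C → QDer L φ (univRed L C)
  | res {C₁ C₂} {p : Var} :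
      QDer L φ C₁ → QDer L φ C₂ →
      ¬ Tauto C₁ → ¬ Tauto C₂ →
      quantOf L p = true → (⟨p, true⟩ : Lit) ∈ C₁ → (⟨p, false⟩ : Lit) ∈ C₂ →
      ¬ Tauto (qResolvent L C₁ C₂ p) →
      QDer L φ (qResolvent L C₁ C₂ p)

/-- The initial cube of a (total) model `α`: conjunction of the literals set by `α`,
in prefix order. -/
def initCube (L : QPrefix) (α : Assignment) : Cube :=
  L.map (fun p => ⟨p.2, α p.2⟩)

/-- Tentative cube qResolvent of two cubes on universal pivot `x`. -/
def cubeResolvent (L : QPrefix) (C₁ C₂ : Cube) (x : Var) : Cube :=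
  (exRed L C₁).filter (fun l => l ≠ ⟨x, true⟩) ++
  (exRed L C₂).filter (fun l => l ≠ ⟨x, false⟩)

/-- Cube derivations: model generation rule, existential reduction, cube resolution. -/
inductive CubeDer (L : QPrefix) (φ : CNF) : Cube → Prop
  | init (α : Assignment) : CNF.eval α φ = true → CubeDer L φ (initCube L α)
  | er {C} : CubeDer L φ C → CubeDer L φ (exRed L C)
  | res {C₁ C₂} {x : Var} :
      CubeDer L φ C₁ → CubeDer L φ C₂ →
      ¬ Tauto C₁ → ¬ Tauto C₂ →
      quantOf L x = false → (⟨x, true⟩ : Lit) ∈ C₁ → (⟨x, false⟩ : Lit) ∈ C₂ →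
      ¬ Tauto (cubeResolvent L C₁ C₂ x) →
      CubeDer L φ (cubeResolvent L C₁ C₂ x)

/-- Block-structured prefix: list of (quantifier, block of variables). -/
abbrev BPrefix := List (Bool × List Var)

def flatP (P : BPrefix) : QPrefix := P.flatMap (fun b => b.2.map (fun x => (b.1, x)))

def SatB (P : BPrefix) (m : Assignment → Bool) : Prop := Sat (flatP P) m

/-- Closed PCNF with block prefix. -/
def ClosedB (P : BPrefix) (φ : CNF) : Prop :=
  (∀ v ∈ CNF.vars φ, v ∈ pvars (flatP P)) ∧
  (∀ v ∈ pvars (flatP P), v ∈ CNF.vars φ) ∧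
  (pvars (flatP P)).Nodup



/-! Since `s` is not bound by the prefix, fixing it to `b` commutes with all the quantifiers.
Under `s ↦ b` each framed clause `s ∨ C` evaluates to `C` when `b` is false and to true when
`b` is true; in the latter case `s` no longer occurs in the remaining matrix `φ`. -/

open Function

lemma QSat_update_of_notMem {s : Var} (b : Bool) {m : Assignment → Bool} :
    ∀ {L : QPrefix} {α : Assignment}, s ∉ pvars L →
      (QSat (update α s b) L m ↔ QSat α L (fun β => m (update β s b)))
  | [], _, _ => Iff.rfl
  | (q, x) :: L, α, hs => by
    simp only [pvars, List.map_cons, List.mem_cons, not_or] at hs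
    have step : ∀ c, QSat (update (update α s b) x c) L m ↔
        QSat (update α x c) L (fun β => m (update β s b)) := fun c => by
      rw [update_comm hs.1]
      exact QSat_update_of_notMem b hs.2
    cases q
    · exact forall_congr' step
    · exact exists_congr step

lemma Clause.eval_update_of_notMem {C : Clause} {x : Var} (hx : x ∉ C.vars)
    (β : Assignment) (b : Bool) : C.eval (update β x b) = C.eval β := by
  simp only [Clause.vars, List.mem_map, not_exists, not_and] at hx
  rw [Clause.eval, Clause.eval, Bool.eq_iff_iff, List.any_eq_true, List.any_eq_true]
  refine exists_congr fun l => and_congr_right fun hl => ?_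
  rw [Lit.eval, Lit.eval, update_of_ne (hx l hl)]

lemma CNF.eval_update_of_notMem {φ : CNF} {x : Var} (hx : x ∉ φ.vars)
    (β : Assignment) (b : Bool) : φ.eval (update β x b) = φ.eval β := by
  simp only [CNF.vars, List.mem_flatMap, not_exists, not_and] at hx
  rw [CNF.eval, CNF.eval, Bool.eq_iff_iff, List.all_eq_true, List.all_eq_true]
  refine forall_congr' fun C => imp_congr_right fun hC => ?_
  rw [C.eval_update_of_notMem (hx C hC)]

lemma CNF.eval_append (β : Assignment) (φ ψ : CNF) :
    (φ ++ ψ).eval β = (φ.eval β && ψ.eval β) :=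
  List.all_append

lemma CNF.eval_map_cons (β : Assignment) (l : Lit) (F : CNF) :
    CNF.eval β (F.map fun C => l :: C) = (l.eval β || F.eval β) := by
  induction F with
  | nil => simp [CNF.eval]
  | cons C F ih =>
    simp only [CNF.eval, List.map_cons, List.all_cons, Clause.eval, List.any_cons] at ih ⊢
    rw [ih]
    cases l.eval β <;> rfl

theorem selector_sound_general (s : Var) (P : BPrefix) (φ F : CNF)
    (hsφ : s ∉ CNF.vars φ) (hsP : s ∉ pvars (flatP P)) :
    (QSat (Function.update (fun _ => false) s false) (flatP P)
        (fun α => CNF.eval α (φ ++ F.map (fun C => (⟨s, true⟩ : Lit) :: C))) ↔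
      SatB P (fun α => CNF.eval α (φ ++ F))) ∧
    (QSat (Function.update (fun _ => false) s true) (flatP P)
        (fun α => CNF.eval α (φ ++ F.map (fun C => (⟨s, true⟩ : Lit) :: C))) ↔
      SatB P (fun α => CNF.eval α φ)) := by
  have h_framed : ∀ b β, CNF.eval (update β s b) (φ ++ F.map fun C => ⟨s, true⟩ :: C) =
      (CNF.eval (update β s b) φ && (b || CNF.eval (update β s b) F)) := fun b β => by
    simp only [CNF.eval_append, CNF.eval_map_cons, Lit.eval, update_self, if_true]
  have h_unset : update (fun _ => false) s false = fun _ => false := update_eq_self s _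
  rw [SatB, Sat, SatB, Sat, QSat_update_of_notMem false hsP, QSat_update_of_notMem true hsP]
  constructor
  · conv_rhs => rw [← h_unset, QSat_update_of_notMem false hsP]
    simp only [h_framed, Bool.false_or, CNF.eval_append]
  · simp only [h_framed, Bool.true_or, Bool.and_true, CNF.eval_update_of_notMem hsφ]

/-- selector-variable soundness. The fresh existential selector `s`
sits alone in the leftmost block and is added positively to every clause of the
frame `F`. Assigning `s` to false restores the frame clauses, assigning it to
true disables them. -/
theorem selector_sound (s : Var) (P : BPrefix) (φ F : CNF)
    (hsφ : s ∉ CNF.vars φ) (hsF : s ∉ CNF.vars F) (hsP : s ∉ pvars (flatP P)) :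
    (QSat (Function.update (fun _ => false) s false) (flatP P)
        (fun α => CNF.eval α (φ ++ F.map (fun C => (⟨s, true⟩ : Lit) :: C))) ↔
      SatB P (fun α => CNF.eval α (φ ++ F))) ∧
    (QSat (Function.update (fun _ => false) s true) (flatP P)
        (fun α => CNF.eval α (φ ++ F.map (fun C => (⟨s, true⟩ : Lit) :: C))) ↔
      SatB P (fun α => CNF.eval α φ)) :=
  selector_sound_general s P φ F hsφ hsP
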